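/- arXiv:2108.06941 — 3 statements merged into one kernel-verified Lean document; each statement's English description precedes it below -/
import Mathlib

section
/- Let d ≥ 1 and let τ_UV be the upper Vietoris topology on the collection of all closed subsets of ℝ^d, i.e. the topology generated by the sets {F ⊆ ℝ^d : F closed, F ⊆ U} for U ranging over the open subsets of ℝ^d. Then no countable family of subsets of this hyperspace is a pseudobase for τ_UV. In particular, the hyperspace of closed subsets of ℝ^d with the upper Vietoris topology is not second countable. -/
/-!
Testing a pseudobase on constant sequences shows that it is a network: every open neighbourhood
of a point contains a member of the family containing that point. Let `e 0, e 1, …` be a closed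
discrete sequence of distinct points of `ℝ^d`. For `A ⊆ ℕ` the closed set `e(A)` lies in the
upper Vietoris open set `{F | F ⊆ ℝ^d ∖ e(ℕ ∖ A)}`, and `e(A)` lies in the one built from `A'`
iff `A ⊆ A'`. A network member squeezed between `e(A)` and its open set therefore determines `A`,
so a pseudobase has at least as many members as `Set ℕ`.
-/

open Topology

/-- The type of closed subsets of `ℝ^d`. -/
def ClosedSubsets (d : ℕ) : Type :=
  {F : Set (EuclideanSpace ℝ (Fin d)) // IsClosed F}

/-- The upper Vietoris topology on the closed subsets of `ℝ^d`, generated by the sets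
`{F closed : F ⊆ U}` for `U` open. -/
def upperVietoris (d : ℕ) : TopologicalSpace (ClosedSubsets d) :=
  TopologicalSpace.generateFrom
    {S | ∃ U : Set (EuclideanSpace ℝ (Fin d)), IsOpen U ∧ S = {F : ClosedSubsets d | F.1 ⊆ U}}

/-- A family `B` of subsets of a topological space `(X, τ)` is a pseudobase if for every
open `U`, every `x ∈ U` and every sequence `y` converging to `x`, there are `P ∈ B` and `n₀`
with `{x} ∪ {y n : n ≥ n₀} ⊆ P ⊆ U`. -/
def IsPseudobase {X : Type*} (τ : TopologicalSpace X) (B : Set (Set X)) : Prop :=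
  ∀ U : Set X, IsOpen[τ] U → ∀ x ∈ U, ∀ y : ℕ → X,
    Filter.Tendsto y Filter.atTop (@nhds X τ x) →
    ∃ P ∈ B, ∃ n₀ : ℕ, ({x} ∪ {z | ∃ n ≥ n₀, z = y n}) ⊆ P ∧ P ⊆ U

namespace IsPseudobase

variable {X : Type*} {τ : TopologicalSpace X} {B : Set (Set X)}

theorem exists_mem_subset (hB : IsPseudobase τ B) {U : Set X} (hU : IsOpen[τ] U) {x : X}
    (hx : x ∈ U) : ∃ P ∈ B, x ∈ P ∧ P ⊆ U := by
  obtain ⟨P, hPB, _, hxP, hPU⟩ := hB U hU x hx (fun _ => x) tendsto_const_nhds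
  exact ⟨P, hPB, hxP (Or.inl rfl), hPU⟩

theorem exists_injective {ι : Type*} {x : ι → X} {U : ι → Set X} (hB : IsPseudobase τ B)
    (hU : ∀ i, IsOpen[τ] (U i)) (hxU : ∀ i, x i ∈ U i)
    (hsep : ∀ i j, x i ∈ U j → x j ∈ U i → i = j) : ∃ f : ι → B, Function.Injective f := by
  choose P hPB hxP hPU using fun i => hB.exists_mem_subset (hU i) (hxU i)
  refine ⟨fun i => ⟨P i, hPB i⟩, fun i j hij => ?_⟩
  have hP : P i = P j := congrArg Subtype.val hij
  exact hsep i j (hPU j (hP ▸ hxP i)) (hPU i (hP ▸ hxP j))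

end IsPseudobase

theorem TopologicalSpace.IsTopologicalBasis.isPseudobase {X : Type*} [t : TopologicalSpace X]
    {B : Set (Set X)} (hB : IsTopologicalBasis B) : IsPseudobase t B := by
  intro U hU x hx y hy
  obtain ⟨P, hPB, hxP, hPU⟩ := hB.exists_subset_of_mem_open hx hU
  obtain ⟨n₀, hn₀⟩ := Filter.eventually_atTop.mp (hy ((hB.isOpen hPB).mem_nhds hxP))
  refine ⟨P, hPB, n₀, ?_, hPU⟩
  rintro z (rfl | ⟨n, hn, rfl⟩)
  · exact hxP
  · exact hn₀ n hn

theorem EuclideanSpace.isClosedEmbedding_natCast_single {d : ℕ} (i : Fin d) :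
    IsClosedEmbedding fun n : ℕ => EuclideanSpace.single i (n : ℝ) := by
  have hsingle : Isometry (EuclideanSpace.single i : ℝ → EuclideanSpace ℝ (Fin d)) :=
    .of_dist_eq fun a b => by simp
  exact hsingle.isClosedEmbedding.comp Nat.isClosedEmbedding_coe_real

theorem upperVietoris_isOpen_setOf_subset {d : ℕ} {U : Set (EuclideanSpace ℝ (Fin d))}
    (hU : IsOpen U) : IsOpen[upperVietoris d] {F : ClosedSubsets d | F.1 ⊆ U} :=
  TopologicalSpace.isOpen_generateFrom_of_mem ⟨U, hU, rfl⟩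

theorem not_isPseudobase_upperVietoris_of_countable {d : ℕ} (hd : 1 ≤ d)
    {B : Set (Set (ClosedSubsets d))} (hBc : B.Countable) : ¬ IsPseudobase (upperVietoris d) B := by
  intro hB
  obtain ⟨e, he⟩ : ∃ e : ℕ → EuclideanSpace ℝ (Fin d), IsClosedEmbedding e :=
    ⟨_, EuclideanSpace.isClosedEmbedding_natCast_single ⟨0, hd⟩⟩
  have hclosed (A : Set ℕ) : IsClosed (e '' A) := he.isClosedMap A (isClosed_discrete A)
  have hmem (A A' : Set ℕ) : e '' A ⊆ (e '' A'ᶜ)ᶜ ↔ A ⊆ A' := by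
    rw [Set.subset_compl_iff_disjoint_right, Set.disjoint_image_iff he.injective,
      Set.disjoint_compl_right_iff_subset]
  obtain ⟨f, hf⟩ := hB.exists_injective (x := fun A => ⟨e '' A, hclosed A⟩)
    (fun A => upperVietoris_isOpen_setOf_subset (hclosed Aᶜ).isOpen_compl)
    (fun A => (hmem A A).2 le_rfl)
    (fun A A' h h' => le_antisymm ((hmem A A').1 h) ((hmem A' A).1 h'))
  have : Countable B := hBc.to_subtype
  obtain ⟨g, hg⟩ := Countable.exists_injective_nat B
  exact Function.cantor_injective (g ∘ f) (hg.comp hf)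

/-- No countable family of subsets of the hyperspace of closed subsets of `ℝ^d` with the upper
Vietoris topology is a pseudobase; in particular this hyperspace is not second countable. -/
theorem stmt0 (d : ℕ) (hd : 1 ≤ d) :
    (∀ B : Set (Set (ClosedSubsets d)), B.Countable → ¬ IsPseudobase (upperVietoris d) B) ∧
    ¬ @SecondCountableTopology (ClosedSubsets d) (upperVietoris d) := by
  refine ⟨fun B hBc => not_isPseudobase_upperVietoris_of_countable hd hBc, fun hsc => ?_⟩
  let := upperVietoris d
  obtain ⟨b, hbc, -, hb⟩ := TopologicalSpace.exists_countable_basis (ClosedSubsets d)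
  exact not_isPseudobase_upperVietoris_of_countable hd hbc hb.isPseudobase
end

section
/- Fix a smooth nonnegative φ : ℝ → ℝ with support contained in [0,1] and ∫φ = 1; for ζ > 0 set φ^ζ(x) := ζ⁻¹φ(x/ζ), Φ^ζ(x) := ∑_{k∈ℤ} φ^ζ(x−k), Φ^ζ_p(x) := Φ^ζ(px). For an integer M > 2 let P_M be the set of primes p with M/2 < p ≤ M (nonempty by Bertrand's postulate) and F^ζ_M := |P_M|⁻¹ ∑_{p∈P_M} Φ^ζ_p. Then for every ζ > 0 and every integer M > 2: (1) the 0-th Fourier coefficient of F^ζ_M equals 1; and (2) for every k ∈ ℤ with 0 < |k| ≤ M/2, the k-th Fourier coefficient of F^ζ_M equals 0. -/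
open MeasureTheory

/-- The `k`-th Fourier coefficient of a 1-periodic function `g : ℝ → ℂ`,
`ĝ(k) := ∫₀¹ g(x) e^{-2πikx} dx`. -/
noncomputable def fCoeff (g : ℝ → ℂ) (k : ℤ) : ℂ :=
  ∫ x in (0 : ℝ)..1, g x * Complex.exp (-(2 * (Real.pi : ℂ) * Complex.I * (k : ℂ) * (x : ℂ)))

/-- The rescaling `φ^ζ(x) := ζ⁻¹ φ(x/ζ)`. -/
noncomputable def scaled (φ : ℝ → ℝ) (ζ : ℝ) (x : ℝ) : ℝ := ζ⁻¹ * φ (x / ζ)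

/-- The periodization `∑_{k ∈ ℤ} f(x - k)` of `f : ℝ → ℝ`. -/
noncomputable def periodize (f : ℝ → ℝ) (x : ℝ) : ℝ := ∑' k : ℤ, f (x - (k : ℝ))

/-- `Φ^ζ_p(x) := Φ^ζ(px)`, where `Φ^ζ` is the periodization of `φ^ζ`. -/
noncomputable def Phip (φ : ℝ → ℝ) (ζ : ℝ) (p : ℕ) (x : ℝ) : ℝ :=
  periodize (scaled φ ζ) ((p : ℝ) * x)

/-- The set `P_M` of primes `p` with `M/2 < p ≤ M`. -/
def PM (M : ℕ) : Finset ℕ :=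
  (Finset.range (M + 1)).filter (fun p => Nat.Prime p ∧ M < 2 * p)

/-- `F^ζ_M := |P_M|⁻¹ ∑_{p ∈ P_M} Φ^ζ_p`. -/
noncomputable def FzM (φ : ℝ → ℝ) (ζ : ℝ) (M : ℕ) (x : ℝ) : ℝ :=
  ((PM M).card : ℝ)⁻¹ * ∑ p ∈ PM M, Phip φ ζ p x

/-!
`Φ^ζ_p(x) = Φ^ζ(px)` is `1/p`-periodic, and shifting the integration window of a `1/p`-periodic
function by `1/p` multiplies its `k`-th Fourier coefficient by `e^{-2πik/p}`; so the coefficient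
vanishes unless `p ∣ k`, which never happens for `0 < |k| ≤ M/2 < p`. The `0`-th coefficient of
`Φ^ζ_p` is `∫₀¹ Φ^ζ = ∫_ℝ φ^ζ = ∫_ℝ φ = 1`, and averaging over `P_M` (nonempty by Bertrand)
preserves both facts.
-/

open Function Complex Real

section Periodize

variable {g : ℝ → ℝ}

lemma periodize_periodic (g : ℝ → ℝ) : Periodic (periodize g) 1 := by
  intro x
  rw [periodize, ← (Equiv.addRight (1 : ℤ)).tsum_eq]
  simp only [Equiv.coe_addRight, Int.cast_add, Int.cast_one, add_sub_add_right_eq_sub, periodize]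

lemma periodize_apply_eq_tsum_add (g : ℝ → ℝ) (x : ℝ) :
    periodize g x = ∑' n : ℤ, g (x + n) := by
  rw [periodize, ← (Equiv.neg ℤ).tsum_eq]
  simp [sub_eq_add_neg]

lemma summable_norm_restrict_comp_addRight {E : Type*} [NormedAddCommGroup E] {g : C(ℝ, E)}
    (hg : HasCompactSupport g) (K : TopologicalSpace.Compacts ℝ) :
    Summable fun n : ℤ => ‖(g.comp (ContinuousMap.addRight (n : ℝ))).restrict K‖ := by
  apply summable_of_hasFiniteSupport
  -- a translate by `n` that does not vanish on `K` has `n ∈ tsupport g - K`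
  have hC : IsCompact ((fun y : ℝ × ℝ => y.1 - y.2) '' (tsupport g ×ˢ K)) :=
    (hg.prod K.isCompact).image continuous_sub
  refine (Filter.eventually_cofinite.mp
    (Int.tendsto_coe_cofinite.eventually hC.compl_mem_cocompact)).subset ?_
  intro n hn
  obtain ⟨⟨x, hxK⟩, hx⟩ : ∃ x : K, g (x + n) ≠ 0 := by
    by_contra! h
    exact hn (norm_eq_zero.mpr (ContinuousMap.ext fun x => h x))
  exact fun hnC => hnC ⟨(x + n, x), ⟨subset_tsupport _ hx, hxK⟩, add_sub_cancel_left _ _⟩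

lemma continuous_periodize (hg : Continuous g) (hgc : HasCompactSupport g) :
    Continuous (periodize g) := by
  let F : ℤ → C(ℝ, ℝ) := fun n => (⟨g, hg⟩ : C(ℝ, ℝ)).comp (ContinuousMap.addRight (n : ℝ))
  have hF : Summable F :=
    ContinuousMap.summable_of_locally_summable_norm (summable_norm_restrict_comp_addRight hgc)
  convert (∑' n, F n).continuous
  ext x
  rw [periodize_apply_eq_tsum_add, ← ContinuousMap.tsum_apply hF x]
  rfl

lemma intervalIntegral_periodize (hg : Continuous g) (hgc : HasCompactSupport g) :
    ∫ x in (0 : ℝ)..1, periodize g x = ∫ x, g x := by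
  let F : ℤ → C(ℝ, ℝ) := fun n => (⟨g, hg⟩ : C(ℝ, ℝ)).comp (ContinuousMap.addRight (n : ℝ))
  calc ∫ x in (0 : ℝ)..1, periodize g x = ∫ x in (0 : ℝ)..1, ∑' n, F n x := by
        simp_rw [periodize_apply_eq_tsum_add]; rfl
    _ = ∑' n, ∫ x in (0 : ℝ)..1, F n x :=
        (intervalIntegral.tsum_intervalIntegral_eq_of_summable_norm
          (summable_norm_restrict_comp_addRight hgc _)).symm
    _ = ∫ x, g x :=
        (hg.integrable_of_hasCompactSupport hgc).hasSum_intervalIntegral_comp_add_int.tsum_eq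

end Periodize

lemma intervalIntegral_comp_nat_mul_of_periodic {E : Type*} [NormedAddCommGroup E]
    [NormedSpace ℝ E] {f : ℝ → E} (hf : Periodic f 1)
    (hfi : ∀ a b, IntervalIntegrable f volume a b) {n : ℕ} (hn : n ≠ 0) :
    ∫ x in (0 : ℝ)..1, f (n * x) = ∫ x in (0 : ℝ)..1, f x := by
  have h := hf.intervalIntegral_add_zsmul_eq n 0 hfi
  simp only [zero_add, zsmul_eq_mul, Int.cast_natCast, mul_one] at h
  rw [intervalIntegral.integral_comp_mul_left _ (Nat.cast_ne_zero.mpr hn), mul_zero, mul_one, h,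
    natCast_zsmul, ← Nat.cast_smul_eq_nsmul ℝ, smul_smul,
    inv_mul_cancel₀ (Nat.cast_ne_zero.mpr hn), one_smul]

lemma exp_neg_two_pi_I_mul_inv_ne_one {p : ℕ} (hp : p ≠ 0) {k : ℤ} (hk : ¬ (p : ℤ) ∣ k) :
    exp (-(2 * π * I * k * (p⁻¹ : ℝ))) ≠ 1 := by
  have h : exp (-(2 * π * I * k * (p⁻¹ : ℝ))) = exp (2 * π * I / p) ^ (-k) := by
    rw [← Complex.exp_int_mul]; push_cast; ring_nf
  rw [h, Ne, (Complex.isPrimitiveRoot_exp p hp).zpow_eq_one_iff_dvd, dvd_neg]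
  exact hk

section FourierCoefficients

lemma fCoeff_zero (g : ℝ → ℂ) : fCoeff g 0 = ∫ x in (0 : ℝ)..1, g x := by
  simp [fCoeff]

lemma fCoeff_const_mul_sum {ι : Type*} (s : Finset ι) (c : ℂ) {f : ι → ℝ → ℂ}
    (hf : ∀ i ∈ s, IntervalIntegrable (f i) volume 0 1) (k : ℤ) :
    fCoeff (fun x => c * ∑ i ∈ s, f i x) k = c * ∑ i ∈ s, fCoeff (f i) k := by
  simp only [fCoeff, mul_assoc, Finset.sum_mul]
  rw [intervalIntegral.integral_const_mul, intervalIntegral.integral_finsetSum]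
  exact fun i hi => (hf i hi).mul_continuousOn (by fun_prop)

lemma fCoeff_eq_zero_of_periodic {g : ℝ → ℂ} {T : ℝ} (hg1 : Periodic g 1) (hgT : Periodic g T)
    {k : ℤ} (hk : exp (-(2 * π * I * k * T)) ≠ 1) : fCoeff g k = 0 := by
  set e : ℝ → ℂ := fun x => exp (-(2 * π * I * k * x)) with he
  have he_add (x y : ℝ) : e (x + y) = e x * e y := by
    simp only [e, ← Complex.exp_add]; push_cast; ring_nf
  have he1 : Periodic e 1 := fun x => by
    rw [he_add, he]
    simpa [mul_comm] using Complex.exp_int_mul_two_pi_mul_I (-k)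
  have hshift : fCoeff g k = e T * fCoeff g k := calc
    fCoeff g k = ∫ x in T..T + 1, g x * e x := by
      simpa [fCoeff] using (hg1.mul he1).intervalIntegral_add_eq 0 T
    _ = ∫ x in (0 : ℝ)..1, g (x + T) * e (x + T) := by
      rw [intervalIntegral.integral_comp_add_right (fun x => g x * e x)]; simp [add_comm]
    _ = e T * fCoeff g k := by
      simp only [fCoeff, hgT _, he_add, ← intervalIntegral.integral_const_mul]
      congr 1 with x; ring
  have : (1 - e T) * fCoeff g k = 0 := by linear_combination hshift
  exact (mul_eq_zero.mp this).resolve_left (sub_ne_zero.mpr (Ne.symm hk))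

lemma fCoeff_periodize_comp_mul_eq_zero (g : ℝ → ℝ) {p : ℕ} (hp : p ≠ 0) {k : ℤ}
    (hk : ¬ (p : ℤ) ∣ k) : fCoeff (fun x => (periodize g (p * x) : ℂ)) k = 0 := by
  have hT : Periodic (fun x => periodize g (p * x)) (p⁻¹ : ℝ) := by
    simpa using (periodize_periodic g).const_mul (p : ℝ)
  have h1 : Periodic (fun x => periodize g (p * x)) 1 := by
    simpa [hp] using hT.nat_mul p
  exact fCoeff_eq_zero_of_periodic (h1.comp ofReal) (hT.comp ofReal)
    (exp_neg_two_pi_I_mul_inv_ne_one hp hk)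

lemma fCoeff_periodize_comp_mul_zero {g : ℝ → ℝ} (hg : Continuous g) (hgc : HasCompactSupport g)
    {p : ℕ} (hp : p ≠ 0) : fCoeff (fun x => (periodize g (p * x) : ℂ)) 0 = ∫ x, g x := by
  rw [fCoeff_zero, intervalIntegral.integral_ofReal,
    intervalIntegral_comp_nat_mul_of_periodic (periodize_periodic g)
      (fun a b => (continuous_periodize hg hgc).intervalIntegrable a b) hp,
    intervalIntegral_periodize hg hgc]

end FourierCoefficients

section Scaled

variable {φ : ℝ → ℝ} {ζ : ℝ}

lemma continuous_scaled (hφ : Continuous φ) (ζ : ℝ) : Continuous (scaled φ ζ) := by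
  unfold scaled; fun_prop

lemma hasCompactSupport_scaled (hφ : HasCompactSupport φ) (hζ : ζ ≠ 0) :
    HasCompactSupport (scaled φ ζ) := by
  have h : scaled φ ζ = (fun _ => ζ⁻¹) * fun x => φ (ζ⁻¹ • x) := by
    ext x; simp [scaled, div_eq_inv_mul]
  exact h ▸ (hφ.comp_smul (inv_ne_zero hζ)).mul_left

lemma integral_scaled (φ : ℝ → ℝ) (hζ : 0 < ζ) : ∫ x, scaled φ ζ x = ∫ x, φ x := by
  unfold scaled
  rw [integral_const_mul, Measure.integral_comp_div (fun x => φ x) ζ, smul_eq_mul,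
    abs_of_pos hζ, inv_mul_cancel_left₀ hζ.ne']

end Scaled

lemma PM_nonempty {M : ℕ} (hM : 2 ≤ M) : (PM M).Nonempty := by
  obtain ⟨p, hp, h1, h2⟩ := Nat.exists_prime_lt_and_le_two_mul (M / 2) (by omega)
  exact ⟨p, Finset.mem_filter.mpr ⟨Finset.mem_range.mpr (by omega), hp, by omega⟩⟩

theorem stmt6_general (φ : ℝ → ℝ) (hφ : ContDiff ℝ (⊤ : ℕ∞) φ)
    (hsupp : Function.support φ ⊆ Set.Icc 0 1) (hint : ∫ x : ℝ, φ x = 1) :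
    ∀ ζ : ℝ, 0 < ζ → ∀ M : ℕ, 2 < M →
      fCoeff (fun x => ((FzM φ ζ M x : ℝ) : ℂ)) 0 = 1 ∧
      ∀ k : ℤ, k ≠ 0 → 2 * |k| ≤ (M : ℤ) →
        fCoeff (fun x => ((FzM φ ζ M x : ℝ) : ℂ)) k = 0 := by
  intro ζ hζ M hM
  have hg := continuous_scaled hφ.continuous ζ
  have hgc := hasCompactSupport_scaled
    (HasCompactSupport.of_support_subset_isCompact isCompact_Icc hsupp) hζ.ne'
  have hPM (p : ℕ) (hp : p ∈ PM M) : p.Prime ∧ M < 2 * p := (Finset.mem_filter.mp hp).2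
  have hFzM (k : ℤ) : fCoeff (fun x => ((FzM φ ζ M x : ℝ) : ℂ)) k = ((PM M).card : ℂ)⁻¹ *
      ∑ p ∈ PM M, fCoeff (fun x => (periodize (scaled φ ζ) (p * x) : ℂ)) k := by
    simp only [FzM, Phip, ofReal_mul, ofReal_inv, ofReal_natCast, ofReal_sum]
    exact fCoeff_const_mul_sum _ _ (f := fun (p : ℕ) x => (periodize (scaled φ ζ) (p * x) : ℂ))
      (fun p _ => (continuous_ofReal.comp ((continuous_periodize hg hgc).comp
        (continuous_const_mul (p : ℝ)))).intervalIntegrable 0 1) k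
  refine ⟨?_, fun k hk0 hkM => ?_⟩
  · rw [hFzM, Finset.sum_congr rfl fun p hp =>
      fCoeff_periodize_comp_mul_zero hg hgc (hPM p hp).1.ne_zero, integral_scaled φ hζ, hint]
    simp [(PM_nonempty hM.le).card_ne_zero]
  · rw [hFzM, Finset.sum_eq_zero fun p hp => fCoeff_periodize_comp_mul_eq_zero _
      (hPM p hp).1.ne_zero fun hdvd => hk0 (Int.eq_zero_of_abs_lt_dvd hdvd (by grind [hPM p hp])),
      mul_zero]

/-- For every `ζ > 0` and integer `M > 2`: the 0-th Fourier coefficient of `F^ζ_M` equals 1,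
and the `k`-th Fourier coefficient of `F^ζ_M` vanishes for `0 < |k| ≤ M/2`. -/
theorem stmt6 (φ : ℝ → ℝ) (hφ : ContDiff ℝ (⊤ : ℕ∞) φ) (hpos : ∀ x, 0 ≤ φ x)
    (hsupp : Function.support φ ⊆ Set.Icc 0 1) (hint : ∫ x : ℝ, φ x = 1) :
    ∀ ζ : ℝ, 0 < ζ → ∀ M : ℕ, 2 < M →
      fCoeff (fun x => ((FzM φ ζ M x : ℝ) : ℂ)) 0 = 1 ∧
      ∀ k : ℤ, k ≠ 0 → 2 * |k| ≤ (M : ℤ) →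
        fCoeff (fun x => ((FzM φ ζ M x : ℝ) : ℂ)) k = 0 :=
  stmt6_general φ hφ hsupp hint
end

section
/- Let d ≥ 1 and let K ⊆ ℝ^d be compact. In the product space 𝒦*(K) × [0,d], where 𝒦*(K) carries the Hausdorff metric topology: (i) the set {(A,p) : dim_H(A) > p} is Fσ; and (ii) the set {(A,p) : dim_H(A) ≥ p} is a countable intersection of Fσ sets. -/
/-!
The dimension is detected by the Hausdorff content `ℋ^q_∞` (covers of unrestricted diameter):
`ℋ^q_∞ A = 0` iff `ℋ^q A = 0`, so `p < dim_H A` iff `ℋ^q_∞ A > 0` for some rational `q > p`.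
Unlike `ℋ^q`, the content is upper semicontinuous for the Hausdorff metric: a near-optimal cover
of a compact set `A`, slightly thickened, is an open cover of every compact set close to `A`.
Hence `{(A, p) | p < dim_H A} = ⋃ q n, {A | 1/n ≤ ℋ^q_∞ A} × {p | p < q}` is Fσ, and
`{(A, p) | p ≤ dim_H A} = ⋂ n, {(A, p) | p < dim_H A + 1/(n+1)}`, each of which is again Fσ.
-/

open MeasureTheory TopologicalSpace

/-- A set is Fσ if it is a countable union of closed sets. -/
def IsFsigma {X : Type*} [TopologicalSpace X] (s : Set X) : Prop :=
  ∃ C : ℕ → Set X, (∀ n, IsClosed (C n)) ∧ s = ⋃ n, C n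

open Set Metric ENNReal NNReal Filter Topology

section Fsigma

variable {X : Type*} [TopologicalSpace X]

theorem isFsigma_iff_isGδ_compl {s : Set X} : IsFsigma s ↔ IsGδ sᶜ := by
  rw [isGδ_iff_eq_iInter_nat]
  constructor
  · rintro ⟨C, hC, rfl⟩
    exact ⟨fun n => (C n)ᶜ, fun n => (hC n).isOpen_compl, compl_iUnion C⟩
  · rintro ⟨U, hU, hsU⟩
    refine ⟨fun n => (U n)ᶜ, fun n => (hU n).isClosed_compl, ?_⟩
    rw [← compl_iInter, ← hsU, compl_compl]

theorem IsClosed.isFsigma {s : Set X} (hs : IsClosed s) : IsFsigma s :=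
  isFsigma_iff_isGδ_compl.2 hs.isOpen_compl.isGδ

theorem IsOpen.isFsigma [PerfectlyNormalSpace X] {s : Set X} (hs : IsOpen s) : IsFsigma s :=
  isFsigma_iff_isGδ_compl.2 hs.isClosed_compl.isGδ

theorem IsFsigma.iUnion {ι : Sort*} [Countable ι] {s : ι → Set X} (hs : ∀ i, IsFsigma (s i)) :
    IsFsigma (⋃ i, s i) := by
  rw [isFsigma_iff_isGδ_compl, compl_iUnion]
  exact .iInter fun i => isFsigma_iff_isGδ_compl.1 (hs i)

theorem IsFsigma.union {s t : Set X} (hs : IsFsigma s) (ht : IsFsigma t) : IsFsigma (s ∪ t) := by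
  rw [isFsigma_iff_isGδ_compl, compl_union]
  exact (isFsigma_iff_isGδ_compl.1 hs).inter (isFsigma_iff_isGδ_compl.1 ht)

theorem IsFsigma.inter {s t : Set X} (hs : IsFsigma s) (ht : IsFsigma t) : IsFsigma (s ∩ t) := by
  rw [isFsigma_iff_isGδ_compl, compl_inter]
  exact (isFsigma_iff_isGδ_compl.1 hs).union (isFsigma_iff_isGδ_compl.1 ht)

end Fsigma

namespace ENNReal

theorem lt_add_iff_tsub_lt_or_lt {a b c : ℝ≥0∞} (hc : c ≠ ∞) : a < b + c ↔ a - c < b ∨ a < c := by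
  rcases lt_or_ge a c with hac | hca
  · simpa [hac] using hac.trans_le le_add_self
  · simp [ENNReal.sub_lt_iff_lt_right hc hca, hca.not_gt]

theorem le_iff_forall_lt_add_inv_succ {a b : ℝ≥0∞} (ha : a ≠ ∞) :
    a ≤ b ↔ ∀ n : ℕ, a < b + ((n : ℝ≥0∞) + 1)⁻¹ := by
  refine ⟨fun hab n => ?_, fun h => ?_⟩
  · exact (ENNReal.lt_add_right ha (b := ((n : ℝ≥0∞) + 1)⁻¹) (by simp)).trans_le (by gcongr)
  · refine ENNReal.le_of_forall_pos_le_add fun ε hε _ => ?_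
    obtain ⟨n, hn⟩ := exists_inv_nat_lt (a := ε) (by simpa using hε.ne')
    calc a ≤ b + ((n : ℝ≥0∞) + 1)⁻¹ := (h n).le
      _ ≤ b + ε := by gcongr; exact (ENNReal.inv_le_inv.2 le_self_add).trans hn.le

theorem pos_iff_exists_inv_natCast_le {a : ℝ≥0∞} : 0 < a ↔ ∃ n : ℕ, (n : ℝ≥0∞)⁻¹ ≤ a :=
  ⟨fun ha => (exists_inv_nat_lt ha.ne').imp fun _ => le_of_lt,
    fun ⟨_, hn⟩ => (ENNReal.inv_pos.2 (natCast_ne_top _)).trans_le hn⟩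

end ENNReal

section HausdorffContent

variable {X : Type*} [EMetricSpace X]

noncomputable def hausdorffContent (q : ℝ) (s : Set X) : ℝ≥0∞ :=
  ⨅ (t : ℕ → Set X) (_ : s ⊆ ⋃ n, t n), ∑' n, ediam (t n) ^ q

theorem hausdorffContent_le_tsum {q : ℝ} {s : Set X} {t : ℕ → Set X} (h : s ⊆ ⋃ n, t n) :
    hausdorffContent q s ≤ ∑' n, ediam (t n) ^ q :=
  iInf₂_le t h

theorem hausdorffContent_lt_iff {q : ℝ} {s : Set X} {c : ℝ≥0∞} :
    hausdorffContent q s < c ↔ ∃ t : ℕ → Set X, s ⊆ ⋃ n, t n ∧ ∑' n, ediam (t n) ^ q < c := by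
  simp only [hausdorffContent, iInf_lt_iff, exists_prop]

section Measure

variable [MeasurableSpace X] [BorelSpace X]

theorem hausdorffContent_le_hausdorffMeasure {q : ℝ} (hq : 0 < q) (s : Set X) :
    hausdorffContent q s ≤ μH[q] s := by
  rw [Measure.hausdorffMeasure_apply]
  refine le_iSup₂_of_le 1 one_pos (le_iInf₂ fun t hst => le_iInf fun _ => ?_)
  refine (hausdorffContent_le_tsum hst).trans (ENNReal.tsum_le_tsum fun n => ?_)
  rcases (t n).eq_empty_or_nonempty with h | h
  · simp [h, ENNReal.zero_rpow_of_pos hq]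
  · simp [h]

theorem hausdorffMeasure_eq_zero_of_hausdorffContent_eq_zero {q : ℝ} (hq : 0 < q) {s : Set X}
    (h : hausdorffContent q s = 0) : μH[q] s = 0 := by
  rw [Measure.hausdorffMeasure_apply, ← nonpos_iff_eq_zero]
  refine iSup₂_le fun r hr => le_of_forall_gt fun b hb => ?_
  -- a cover of total mass below `r ^ q` consists of sets of diameter below `r`
  obtain ⟨t, hst, ht⟩ := hausdorffContent_lt_iff.1
    (h.trans_lt (lt_min hb (ENNReal.rpow_pos_of_nonneg hr hq.le)))
  have hdiam : ∀ n, ediam (t n) ≤ r := fun n =>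
    ((ENNReal.rpow_lt_rpow_iff hq).1 <|
      (ENNReal.le_tsum n).trans_lt (ht.trans_le (min_le_right _ _))).le
  calc _ ≤ ∑' n, ⨆ _ : (t n).Nonempty, ediam (t n) ^ q := iInf₂_le_of_le t hst (iInf_le _ hdiam)
    _ ≤ ∑' n, ediam (t n) ^ q := ENNReal.tsum_le_tsum fun n => iSup_le fun _ => le_rfl
    _ < b := ht.trans_le (min_le_left _ _)

theorem hausdorffContent_eq_zero_iff {q : ℝ} (hq : 0 < q) {s : Set X} :
    hausdorffContent q s = 0 ↔ μH[q] s = 0 :=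
  ⟨hausdorffMeasure_eq_zero_of_hausdorffContent_eq_zero hq,
    fun h => nonpos_iff_eq_zero.1 (h ▸ hausdorffContent_le_hausdorffMeasure hq s)⟩

end Measure

theorem lt_dimH_iff_exists_rat_hausdorffContent_pos {a : ℝ≥0∞} {s : Set X} :
    a < dimH s ↔ ∃ q : ℚ, 0 < q ∧ a < ENNReal.ofReal q ∧ 0 < hausdorffContent q s := by
  borelize X
  constructor
  · intro h
    obtain ⟨q, -, haq, hqs⟩ := ENNReal.lt_iff_exists_rat_btwn.1 h
    have hq : 0 < (q : ℝ) := ENNReal.ofReal_pos.1 (pos_of_gt haq)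
    have hμ : μH[q] s = ∞ := by
      simpa [Real.coe_toNNReal _ hq.le] using hausdorffMeasure_of_lt_dimH hqs
    refine ⟨q, Rat.cast_pos.1 hq, haq, pos_iff_ne_zero.2 fun h0 => ?_⟩
    simp [(hausdorffContent_eq_zero_iff hq).1 h0] at hμ
  · rintro ⟨q, hq, haq, hpos⟩
    have hq' : 0 < (q : ℝ) := Rat.cast_pos.2 hq
    refine haq.trans_le (le_dimH_of_hausdorffMeasure_ne_zero ?_)
    rw [Real.coe_toNNReal _ hq'.le, Ne, ← hausdorffContent_eq_zero_iff hq']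
    exact hpos.ne'

theorem exists_pos_ediam_thickening_rpow_lt {q : ℝ} (hq : 0 ≤ q) {s : Set X}
    (hs : ediam s ^ q ≠ ∞) {δ : ℝ≥0∞} (hδ : δ ≠ 0) :
    ∃ ε : ℝ≥0, 0 < ε ∧ ediam (thickening ε s) ^ q < ediam s ^ q + δ := by
  have hcont : Continuous fun e : ℝ≥0 => (ediam s + 2 * (e : ℝ≥0∞)) ^ q :=
    ENNReal.continuous_rpow_const.comp <| continuous_const.add <|
      (ENNReal.continuous_const_mul (by simp)).comp ENNReal.continuous_coe
  have hlim : Tendsto (fun e : ℝ≥0 => (ediam s + 2 * (e : ℝ≥0∞)) ^ q) (𝓝[>] 0)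
      (𝓝 (ediam s ^ q)) := by
    simpa using (hcont.tendsto 0).mono_left nhdsWithin_le_nhds
  obtain ⟨ε, hε, hεpos⟩ :=
    ((hlim.eventually (gt_mem_nhds (ENNReal.lt_add_right hs hδ))).and self_mem_nhdsWithin).exists
  exact ⟨ε, hεpos, (ENNReal.rpow_le_rpow (ediam_thickening_le ε) hq).trans_lt hε⟩

theorem exists_isOpen_forall_subset_hausdorffContent_lt {q : ℝ} (hq : 0 ≤ q) {s : Set X}
    {c : ℝ≥0∞} (h : hausdorffContent q s < c) :
    ∃ U, IsOpen U ∧ s ⊆ U ∧ ∀ u ⊆ U, hausdorffContent q u < c := by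
  obtain ⟨t, hst, hS⟩ := hausdorffContent_lt_iff.1 h
  set S := ∑' n, ediam (t n) ^ q
  have hSfin : S ≠ ∞ := (hS.trans_le le_top).ne
  obtain ⟨δ, hδpos, hδ⟩ := ENNReal.exists_pos_sum_of_countable' (tsub_pos_of_lt hS).ne' ℕ
  choose ε hεpos hε using fun n => exists_pos_ediam_thickening_rpow_lt hq
    (ne_top_of_le_ne_top hSfin (ENNReal.le_tsum n)) (hδpos n).ne'
  refine ⟨⋃ n, thickening (ε n) (t n), isOpen_iUnion fun _ => isOpen_thickening,
    hst.trans (iUnion_mono fun n => self_subset_thickening (by exact_mod_cast hεpos n) _),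
    fun u hu => ?_⟩
  calc hausdorffContent q u ≤ ∑' n, ediam (thickening (ε n) (t n)) ^ q :=
        hausdorffContent_le_tsum hu
    _ ≤ ∑' n, (ediam (t n) ^ q + δ n) := ENNReal.tsum_le_tsum fun n => (hε n).le
    _ = S + ∑' n, δ n := ENNReal.tsum_add
    _ < S + (c - S) := ENNReal.add_lt_add_left hSfin hδ
    _ = c := add_tsub_cancel_of_le hS.le

theorem NonemptyCompacts.eventually_subset_of_isOpen {A : NonemptyCompacts X} {U : Set X}
    (hU : IsOpen U) (hAU : (A : Set X) ⊆ U) :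
    ∀ᶠ B : NonemptyCompacts X in 𝓝 A, (B : Set X) ⊆ U := by
  obtain ⟨r, hr, hrU⟩ := A.isCompact.exists_thickening_subset_open hU hAU
  filter_upwards [eball_mem_nhds A (ENNReal.ofReal_pos.2 hr)] with B hB x hx
  refine hrU (mem_thickening_iff_infEDist_lt.2 ?_)
  exact (infEDist_le_hausdorffEDist_of_mem hx).trans_lt hB

theorem upperSemicontinuous_hausdorffContent {q : ℝ} (hq : 0 ≤ q) :
    UpperSemicontinuous fun A : NonemptyCompacts X => hausdorffContent q (A : Set X) := by
  intro A c hc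
  obtain ⟨U, hU, hAU, hUc⟩ := exists_isOpen_forall_subset_hausdorffContent_lt hq hc
  exact (NonemptyCompacts.eventually_subset_of_isOpen hU hAU).mono fun B hB => hUc _ hB

end HausdorffContent

section DimHFsigma

variable {X Z : Type*} [EMetricSpace X] [TopologicalSpace Z] [PerfectlyNormalSpace Z]
  {A : Z → NonemptyCompacts X} {g : Z → ℝ≥0∞}

theorem isFsigma_setOf_lt_dimH (hA : Continuous A) (hg : Continuous g) :
    IsFsigma {z | g z < dimH (A z : Set X)} := by
  have hset : {z | g z < dimH (A z : Set X)} = ⋃ (q : ℚ) (_ : 0 < q) (n : ℕ),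
      {z | g z < ENNReal.ofReal q} ∩
        A ⁻¹' {B | (n : ℝ≥0∞)⁻¹ ≤ hausdorffContent q (B : Set X)} := by
    ext z
    simp only [mem_ofPred_eq, lt_dimH_iff_exists_rat_hausdorffContent_pos,
      ENNReal.pos_iff_exists_inv_natCast_le, mem_iUnion,
      mem_inter_iff, mem_preimage, exists_prop, exists_and_left]
  rw [hset]
  refine IsFsigma.iUnion fun q => IsFsigma.iUnion fun hq => IsFsigma.iUnion fun n => ?_
  exact (isOpen_lt hg continuous_const).isFsigma.inter
    (((upperSemicontinuous_hausdorffContent (Rat.cast_nonneg.2 hq.le)).isClosed_preimage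
      _).preimage hA).isFsigma

theorem isFsigma_setOf_lt_dimH_add (hA : Continuous A) (hg : Continuous g) {c : ℝ≥0∞}
    (hc : c ≠ ∞) : IsFsigma {z | g z < dimH (A z : Set X) + c} := by
  simp only [ENNReal.lt_add_iff_tsub_lt_or_lt hc, ofPred_or]
  exact (isFsigma_setOf_lt_dimH hA ((ENNReal.continuous_sub_right c).comp hg)).union
    (isOpen_lt hg continuous_const).isFsigma

end DimHFsigma

theorem stmt14_general (d : ℕ)
    (K : Set (EuclideanSpace ℝ (Fin d))) :
    IsFsigma {x : NonemptyCompacts ↥K × ↥(Set.Icc (0 : ℝ) (d : ℝ)) |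
        ENNReal.ofReal (x.2 : ℝ) < dimH (Subtype.val '' (x.1 : Set ↥K))} ∧
    (∃ C : ℕ → Set (NonemptyCompacts ↥K × ↥(Set.Icc (0 : ℝ) (d : ℝ))),
      (∀ n, IsFsigma (C n)) ∧
      {x : NonemptyCompacts ↥K × ↥(Set.Icc (0 : ℝ) (d : ℝ)) |
        ENNReal.ofReal (x.2 : ℝ) ≤ dimH (Subtype.val '' (x.1 : Set ↥K))} = ⋂ n, C n) := by
  have hdimH (A : NonemptyCompacts K) : dimH (Subtype.val '' (A : Set K)) = dimH (A : Set K) :=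
    isometry_subtype_coe.dimH_image _
  have hp : Continuous fun x : NonemptyCompacts K × Icc (0 : ℝ) d => ENNReal.ofReal x.2 :=
    ENNReal.continuous_ofReal.comp (continuous_subtype_val.comp continuous_snd)
  simp only [hdimH]
  refine ⟨isFsigma_setOf_lt_dimH continuous_fst hp,
    fun n => {x | ENNReal.ofReal x.2 < dimH (x.1 : Set K) + ((n : ℝ≥0∞) + 1)⁻¹},
    fun n => isFsigma_setOf_lt_dimH_add continuous_fst hp (by simp), ?_⟩
  ext x
  simpa only [mem_ofPred_eq, mem_iInter] using
    ENNReal.le_iff_forall_lt_add_inv_succ ENNReal.ofReal_ne_top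

/-- For `K ⊆ ℝ^d` compact, in `𝒦*(K) × [0,d]` the set `{(A,p) : dim_H(A) > p}` is Fσ and the
set `{(A,p) : dim_H(A) ≥ p}` is a countable intersection of Fσ sets. -/
theorem stmt14 (d : ℕ) (hd : 1 ≤ d)
    (K : Set (EuclideanSpace ℝ (Fin d))) (hK : IsCompact K) :
    IsFsigma {x : NonemptyCompacts ↥K × ↥(Set.Icc (0 : ℝ) (d : ℝ)) |
        ENNReal.ofReal (x.2 : ℝ) < dimH (Subtype.val '' (x.1 : Set ↥K))} ∧
    (∃ C : ℕ → Set (NonemptyCompacts ↥K × ↥(Set.Icc (0 : ℝ) (d : ℝ))),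
      (∀ n, IsFsigma (C n)) ∧
      {x : NonemptyCompacts ↥K × ↥(Set.Icc (0 : ℝ) (d : ℝ)) |
        ENNReal.ofReal (x.2 : ℝ) ≤ dimH (Subtype.val '' (x.1 : Set ↥K))} = ⋂ n, C n) :=
  stmt14_general d K
end
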